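/- arXiv:2410.23094 — 2 statements merged into one kernel-verified Lean document; each statement's English description precedes it below -/
import Mathlib

section
/- Let R = F_2[w_0, w_1, w_2, …] carry operations Sq¹ (a derivation) and Sq² satisfying the Cartan formula Sq²(ab) = Sq²(a)b + Sq¹(a)Sq¹(b) + a Sq²(b), with Sq¹(w_0) = w_1, Sq¹(w_j) = 0 for j = 1,2, Sq¹(w_j) = w_{j-1}² for j ≥ 3, and Sq²(w_0) = w_0², Sq²(w_1) = w_2 + w_0w_1, Sq²(w_2) = w_0w_2, Sq²(w_j) = 0 for j ≥ 3. Define x_4 = w_0w_2³ + w_4. Then Sq²(x_4) = 0 and Sq²(Sq¹(x_4)) = 0. -/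
open MvPolynomial

noncomputable abbrev R2 : Type := MvPolynomial ℕ (ZMod 2)

/-- the generator `w_j` -/
noncomputable def w (j : ℕ) : R2 := X j

/-- With `Sq¹` a derivation and `Sq²` satisfying the Cartan formula, with the given
values on the generators `w_j`, the element `x₄ = w₀w₂³ + w₄` satisfies
`Sq²(x₄) = 0` and `Sq²(Sq¹(x₄)) = 0`. -/
theorem sq2_x4 (Sq1 : Derivation (ZMod 2) R2 R2) (Sq2 : R2 →ₗ[ZMod 2] R2)
    (cartan : ∀ a b : R2, Sq2 (a * b) = Sq2 a * b + Sq1 a * Sq1 b + a * Sq2 b)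
    (h10 : Sq1 (w 0) = w 1) (h11 : Sq1 (w 1) = 0) (h12 : Sq1 (w 2) = 0)
    (h1j : ∀ j : ℕ, 3 ≤ j → Sq1 (w j) = (w (j - 1)) ^ 2)
    (h20 : Sq2 (w 0) = (w 0) ^ 2) (h21 : Sq2 (w 1) = w 2 + w 0 * w 1)
    (h22 : Sq2 (w 2) = w 0 * w 2) (h2j : ∀ j : ℕ, 3 ≤ j → Sq2 (w j) = 0) :
    Sq2 (w 0 * (w 2) ^ 3 + w 4) = 0 ∧ Sq2 (Sq1 (w 0 * (w 2) ^ 3 + w 4)) = 0 := by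
  have two0 : (2 : R2) = 0 := by
    exact_mod_cast CharP.cast_eq_zero R2 2
  have s13 : Sq1 (w 3) = w 2 ^ 2 := h1j 3 le_rfl
  have s14 : Sq1 (w 4) = w 3 ^ 2 := h1j 4 (by norm_num)
  have s23 : Sq1 (w 2 ^ 3) = 0 := by
    rw [Derivation.leibniz_pow, h12]; simp
  have t22 : Sq2 (w 2 ^ 2) = 0 := by
    rw [pow_two, cartan, h12, h22]
    ring_nf
    linear_combination (w 0 * w 2 ^ 2) * two0
  have t23 : Sq2 (w 2 ^ 3) = w 0 * w 2 ^ 3 := by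
    have : w 2 ^ 3 = w 2 * w 2 ^ 2 := by ring
    rw [this, cartan, h12, h22, t22]
    ring
  constructor
  · rw [map_add, cartan, h20, s23, t23, h2j 4 (by norm_num)]
    linear_combination (w 0 ^ 2 * w 2 ^ 3) * two0
  · rw [map_add, Derivation.leibniz, s23, h10, smul_eq_mul, smul_eq_mul, mul_zero,
      zero_add, s14, map_add, cartan, h11, h21, t23, pow_two (w 3), cartan, s13,
      h2j 3 le_rfl]
    linear_combination (w 0 * w 1 * w 2 ^ 3 + w 2 ^ 4) * two0
end

section
/- With R, Sq¹, Sq² as above, define for j ≥ 5: x_j = w_0^{2^{j-4}} w_2^{2^{j-3}} w_{j-2} + w_1^{3·2^{j-5}} w_2^{2^{j-4}} w_3^{2^{j-5}} w_{j-3} + w_0^{2^{j-5}} w_1^{2^{j-4}} w_2^{2^{j-3}} w_{j-3} + w_j, and x_4 = w_0w_2³ + w_4. Then for all j ≥ 5, Sq¹(x_j) = x_{j-1}² and Sq²(x_j) = 0. -/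
open MvPolynomial

/-- The elements `x_j` for `j ≥ 4`. -/
noncomputable def x (j : ℕ) : R2 :=
  if j = 4 then w 0 * (w 2) ^ 3 + w 4
  else w 0 ^ 2 ^ (j - 4) * w 2 ^ 2 ^ (j - 3) * w (j - 2) +
    w 1 ^ (3 * 2 ^ (j - 5)) * w 2 ^ 2 ^ (j - 4) * w 3 ^ 2 ^ (j - 5) * w (j - 3) +
    w 0 ^ 2 ^ (j - 5) * w 1 ^ 2 ^ (j - 4) * w 2 ^ 2 ^ (j - 3) * w (j - 3) + w j

lemma two0 : (2 : R2) = 0 := by exact_mod_cast CharP.cast_eq_zero R2 2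

lemma addself (a : R2) : a + a = 0 := by rw [← two_mul, two0, zero_mul]

lemma sqadd (a b : R2) : (a + b) ^ 2 = a ^ 2 + b ^ 2 := by
  linear_combination (a * b) * two0

section
variable (Sq1 : Derivation (ZMod 2) R2 R2) (Sq2 : R2 →ₗ[ZMod 2] R2)
  (cartan : ∀ a b : R2, Sq2 (a * b) = Sq2 a * b + Sq1 a * Sq1 b + a * Sq2 b)

lemma s1mul (a b : R2) : Sq1 (a * b) = a * Sq1 b + b * Sq1 a := by
  rw [Derivation.leibniz]; simp [smul_eq_mul]

lemma s1sq (a : R2) : Sq1 (a ^ 2) = 0 := by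
  rw [sq, s1mul]; exact addself _

lemma s1zpow (a : R2) (h : Sq1 a = 0) (n : ℕ) : Sq1 (a ^ n) = 0 := by
  induction n with
  | zero => simpa using Sq1.map_one_eq_zero
  | succ m ih => rw [pow_succ, s1mul, h, ih]; ring

lemma s1even (a : R2) (n : ℕ) : Sq1 (a ^ (2 * n)) = 0 := by
  rw [pow_mul]; exact s1zpow _ _ (s1sq _ a) _

include cartan

lemma s2one : Sq2 1 = 0 := by
  have h := cartan 1 1
  simp only [mul_one, one_mul, Derivation.map_one_eq_zero, zero_mul, add_zero] at h
  calc Sq2 1 = Sq2 1 + Sq2 1 := h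
    _ = 0 := addself _

lemma s2sq (a : R2) : Sq2 (a ^ 2) = (Sq1 a) ^ 2 := by
  calc Sq2 (a ^ 2) = Sq2 (a * a) := by rw [sq]
    _ = Sq2 a * a + Sq1 a * Sq1 a + a * Sq2 a := cartan a a
    _ = (Sq1 a) ^ 2 + (a * Sq2 a + a * Sq2 a) := by ring
    _ = (Sq1 a) ^ 2 := by rw [addself, add_zero]

lemma s2zpow (a : R2) (h1 : Sq1 a = 0) (h2 : Sq2 a = 0) (n : ℕ) : Sq2 (a ^ n) = 0 := by
  induction n with
  | zero => rw [pow_zero]; exact s2one Sq1 Sq2 cartan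
  | succ m ih => rw [pow_succ, cartan, h1, h2, ih]; ring

lemma s2pow4 (a : R2) : Sq2 (a ^ 4) = 0 := by
  rw [show a ^ 4 = (a ^ 2) ^ 2 by ring, s2sq Sq1 Sq2 cartan, s1sq]
  exact zero_pow (by norm_num)

lemma s2mult4 (a : R2) (n : ℕ) : Sq2 (a ^ (4 * n)) = 0 := by
  rw [pow_mul]
  refine s2zpow Sq1 Sq2 cartan _ ?_ (s2pow4 Sq1 Sq2 cartan a) n
  rw [show a ^ 4 = (a ^ 2) ^ 2 from by ring]
  exact s1sq Sq1 (a ^ 2)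

lemma s2evenpow0 (a : R2) (h : Sq1 a = 0) (n : ℕ) : Sq2 (a ^ (2 * n)) = 0 := by
  rw [pow_mul]
  exact s2zpow Sq1 Sq2 cartan _ (s1sq _ a)
    (by rw [s2sq Sq1 Sq2 cartan, h]; exact zero_pow (by norm_num)) n

end

set_option maxHeartbeats 1000000 in
theorem sq1_sq2_x (Sq1 : Derivation (ZMod 2) R2 R2) (Sq2 : R2 →ₗ[ZMod 2] R2)
    (cartan : ∀ a b : R2, Sq2 (a * b) = Sq2 a * b + Sq1 a * Sq1 b + a * Sq2 b)
    (h10 : Sq1 (w 0) = w 1) (h11 : Sq1 (w 1) = 0) (h12 : Sq1 (w 2) = 0)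
    (h1j : ∀ j : ℕ, 3 ≤ j → Sq1 (w j) = (w (j - 1)) ^ 2)
    (h20 : Sq2 (w 0) = (w 0) ^ 2) (h21 : Sq2 (w 1) = w 2 + w 0 * w 1)
    (h22 : Sq2 (w 2) = w 0 * w 2) (h2j : ∀ j : ℕ, 3 ≤ j → Sq2 (w j) = 0) :
    ∀ j : ℕ, 5 ≤ j → Sq1 (x j) = (x (j - 1)) ^ 2 ∧ Sq2 (x j) = 0 := by
  have e1 : ∀ n, Sq1 (w 1 ^ n) = 0 := s1zpow Sq1 _ h11
  have e2 : ∀ n, Sq1 (w 2 ^ n) = 0 := s1zpow Sq1 _ h12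
  have h13 : Sq1 (w 3) = w 2 ^ 2 := by simpa using h1j 3 (by norm_num)
  intro j hj
  rcases Nat.lt_or_ge j 6 with h6 | h6
  · -- j = 5
    have hj5 : j = 5 := by omega
    subst hj5
    have hx5 : x 5 = w 0 ^ 2 * w 2 ^ 4 * w 3 + w 1 ^ 3 * w 2 ^ 2 * w 3 * w 2
        + w 0 * w 1 ^ 2 * w 2 ^ 4 * w 2 + w 5 := by
      rw [x, if_neg (by norm_num)]; norm_num
    have hx4 : x (5 - 1) = w 0 * w 2 ^ 3 + w 4 := by
      norm_num [x]
    constructor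
    · rw [hx5, hx4, map_add, map_add, map_add]
      simp only [s1mul Sq1, e1, e2, s1sq, h10, h11, h12, h13,
        h1j 5 (by norm_num), show (5:ℕ) - 1 = 4 from rfl,
        mul_zero, zero_mul, add_zero, zero_add]
      linear_combination (w 1 ^ 3 * w 2 ^ 5 - w 0 * w 2 ^ 3 * w 4) * two0
    · have q13 : Sq2 (w 1 ^ 3) = (w 2 + w 0 * w 1) * w 1 ^ 2 := by
        rw [show w 1 ^ 3 = w 1 * w 1 ^ 2 from by ring, cartan, h21, h11,
          s2sq Sq1 Sq2 cartan, h11]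
        ring
      rw [hx5, map_add, map_add, map_add]
      simp only [cartan, s1mul Sq1, e1, e2, s1sq, h10, h11, h12, h13,
        h1j 5 (by norm_num), h20, h21, h22, h2j 3 (by norm_num), h2j 5 (by norm_num),
        s2sq Sq1 Sq2 cartan, s2pow4 Sq1 Sq2 cartan, q13,
        mul_zero, zero_mul, add_zero, zero_add]
      linear_combination (w 1 ^ 2 * w 2 ^ 4 * w 3 + w 0 * w 1 ^ 3 * w 2 ^ 3 * w 3
        + w 0 ^ 2 * w 1 ^ 2 * w 2 ^ 5) * two0
  · obtain ⟨k, rfl⟩ : ∃ k, j = k + 6 := ⟨j - 6, by omega⟩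
    have hne : ¬ (k + 6 = 4) := by omega
    have hx6 : x (k + 6) = w 0 ^ 2 ^ (k+2) * w 2 ^ 2 ^ (k+3) * w (k+4) +
        w 1 ^ (3 * 2 ^ (k+1)) * w 2 ^ 2 ^ (k+2) * w 3 ^ 2 ^ (k+1) * w (k+3) +
        w 0 ^ 2 ^ (k+1) * w 1 ^ 2 ^ (k+2) * w 2 ^ 2 ^ (k+3) * w (k+3) + w (k+6) := by
      rw [x, if_neg hne]
      simp only [show k+6-4 = k+2 from by omega, show k+6-3 = k+3 from by omega,
        show k+6-5 = k+1 from by omega, show k+6-2 = k+4 from by omega]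
    have hx5 : x (k + 6 - 1) = w 0 ^ 2 ^ (k+1) * w 2 ^ 2 ^ (k+2) * w (k+3) +
        w 1 ^ (3 * 2 ^ k) * w 2 ^ 2 ^ (k+1) * w 3 ^ 2 ^ k * w (k+2) +
        w 0 ^ 2 ^ k * w 1 ^ 2 ^ (k+1) * w 2 ^ 2 ^ (k+2) * w (k+2) + w (k+5) := by
      rw [show k+6-1 = k+5 from by omega, x, if_neg (by omega)]
      simp only [show k+5-4 = k+1 from by omega, show k+5-3 = k+2 from by omega,
        show k+5-5 = k from by omega, show k+5-2 = k+3 from by omega]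
    have f0a : Sq1 (w 0 ^ 2 ^ (k+2)) = 0 := by
      rw [show (2:ℕ) ^ (k+2) = 2 * 2 ^ (k+1) from by ring]; exact s1even Sq1 _ _
    have f0b : Sq1 (w 0 ^ 2 ^ (k+1)) = 0 := by
      rw [show (2:ℕ) ^ (k+1) = 2 * 2 ^ k from by ring]; exact s1even Sq1 _ _
    have f3a : Sq1 (w 3 ^ 2 ^ (k+1)) = 0 := by
      rw [show (2:ℕ) ^ (k+1) = 2 * 2 ^ k from by ring]; exact s1even Sq1 _ _
    have g4 : Sq1 (w (k+4)) = w (k+3) ^ 2 := by simpa using h1j (k+4) (by omega)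
    have g3 : Sq1 (w (k+3)) = w (k+2) ^ 2 := by simpa using h1j (k+3) (by omega)
    have g6 : Sq1 (w (k+6)) = w (k+5) ^ 2 := by simpa using h1j (k+6) (by omega)
    constructor
    · rw [hx6, hx5, map_add, map_add, map_add]
      simp only [s1mul Sq1, e1, e2, f0a, f0b, f3a, g3, g4, g6,
        mul_zero, zero_mul, add_zero, zero_add]
      rw [sqadd, sqadd, sqadd]
      ring
    · -- Sq2 part
      have z4 : Sq2 (w (k+4)) = 0 := h2j _ (by omega)
      have z3 : Sq2 (w (k+3)) = 0 := h2j _ (by omega)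
      have z6 : Sq2 (w (k+6)) = 0 := h2j _ (by omega)
      have p0a : Sq2 (w 0 ^ 2 ^ (k+2)) = 0 := by
        rw [show (2:ℕ) ^ (k+2) = 4 * 2 ^ k from by ring]; exact s2mult4 Sq1 Sq2 cartan _ _
      have p2a : Sq2 (w 2 ^ 2 ^ (k+3)) = 0 := by
        rw [show (2:ℕ) ^ (k+3) = 2 * 2 ^ (k+2) from by ring]
        exact s2evenpow0 Sq1 Sq2 cartan _ h12 _
      have p2b : Sq2 (w 2 ^ 2 ^ (k+2)) = 0 := by
        rw [show (2:ℕ) ^ (k+2) = 2 * 2 ^ (k+1) from by ring]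
        exact s2evenpow0 Sq1 Sq2 cartan _ h12 _
      have p1a : Sq2 (w 1 ^ (3 * 2 ^ (k+1))) = 0 := by
        rw [show 3 * 2 ^ (k+1) = 2 * (3 * 2 ^ k) from by ring]
        exact s2evenpow0 Sq1 Sq2 cartan _ h11 _
      have p1b : Sq2 (w 1 ^ 2 ^ (k+2)) = 0 := by
        rw [show (2:ℕ) ^ (k+2) = 2 * 2 ^ (k+1) from by ring]
        exact s2evenpow0 Sq1 Sq2 cartan _ h11 _
      rcases k with _ | m
      · -- k = 0, j = 6
        have q3 : Sq2 (w 3 ^ 2 ^ (0+1)) = (w 2 ^ 2) ^ 2 := by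
          rw [pow_one, s2sq Sq1 Sq2 cartan, h13]
        have q0 : Sq2 (w 0 ^ 2 ^ (0+1)) = w 1 ^ 2 := by
          rw [pow_one, s2sq Sq1 Sq2 cartan, h10]
        rw [hx6, map_add, map_add, map_add]
        simp only [cartan, s1mul Sq1, e1, e2, f0a, f0b, f3a, g3, g4, g6,
          z3, z4, z6, p0a, p1a, p1b, p2a, p2b, q0, q3,
          mul_zero, zero_mul, add_zero, zero_add]
        linear_combination (w 1 ^ 6 * w 2 ^ 8 * w 3) * two0
      · -- k = m + 1
        have p0b : Sq2 (w 0 ^ 2 ^ (m+2)) = 0 := by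
          rw [show (2:ℕ) ^ (m+2) = 4 * 2 ^ m from by ring]; exact s2mult4 Sq1 Sq2 cartan _ _
        have p3a : Sq2 (w 3 ^ 2 ^ (m+2)) = 0 := by
          rw [show (2:ℕ) ^ (m+2) = 4 * 2 ^ m from by ring]; exact s2mult4 Sq1 Sq2 cartan _ _
        rw [hx6, map_add, map_add, map_add]
        simp only [cartan, s1mul Sq1, e1, e2, f0a, f0b, f3a, g3, g4, g6,
          z3, z4, z6, p0a, p0b, p1a, p1b, p2a, p2b, p3a,
          mul_zero, zero_mul, add_zero, zero_add]
end
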